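/- Let $w_1,\dots,w_m \in \mathbb{R}^d$ be unit vectors with incoherence $\mu$, let $S$ have size $k$, let $a$ be supported on $S$ with $|a_i| \ge \alpha$ for $i \in S$ and $|a_i| \le A$ for all $i$ (where $A \ge \alpha$), and set $h = \sum_{i\in S} a_i w_i + \varepsilon$ with $\|\varepsilon\|_2 \le \sigma$. If the threshold $\tau$ satisfies $k\mu A + \sigma < \tau < \alpha - (k-1)\mu A - \sigma$, then the thresholded support $S^\star(h) := \{j : |\langle h, w_j\rangle| > \tau\}$ equals $S$ exactly. -/

import Mathlib

/-!
Since `a` vanishes off `S` and `‖w j‖ = 1`, the correlation `⟪h, w j⟫` equals `a j` plus an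
interference term: the cross terms `a i ⟪w i, w j⟫` over `i ∈ S \ {j}`, each at most `μ A` in
absolute value, and the noise term `⟪ε, w j⟫`, at most `σ`. Off `S` the correlation is therefore
at most `k μ A + σ < τ`; on `S` it is at least `α - (k - 1) μ A - σ > τ`.
-/

open RealInnerProductSpace Finset

section Incoherence

variable {E ι : Type*} [NormedAddCommGroup E] [InnerProductSpace ℝ E]

theorem inner_sum_smul_eq_add_sum_erase [DecidableEq ι] (w : ι → E) (a : ι → ℝ) (s : Finset ι)
    {j : ι} (hwj : ‖w j‖ = 1) (hsupp : j ∉ s → a j = 0) :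
    ⟪∑ i ∈ s, a i • w i, w j⟫ = a j + ∑ i ∈ s.erase j, a i * ⟪w i, w j⟫ := by
  have hterm : ∀ i, ⟪a i • w i, w j⟫ = a i * ⟪w i, w j⟫ := fun i => real_inner_smul_left _ _ _
  simp only [sum_inner, hterm]
  by_cases hj : j ∈ s
  · rw [← add_sum_erase s _ hj, real_inner_self_eq_norm_sq, hwj, one_pow, mul_one]
  · rw [erase_eq_of_notMem hj, hsupp hj, zero_add]

theorem abs_sum_mul_inner_le (w : ι → E) (a : ι → ℝ) (s : Finset ι) (v : E) {μ A : ℝ}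
    (hincoh : ∀ i ∈ s, |⟪w i, v⟫| ≤ μ) (hup : ∀ i ∈ s, |a i| ≤ A) :
    |∑ i ∈ s, a i * ⟪w i, v⟫| ≤ #s * (μ * A) := by
  have hterm : ∀ i ∈ s, |a i * ⟪w i, v⟫| ≤ μ * A := fun i hi => by
    rw [abs_mul, mul_comm]
    exact mul_le_mul (hincoh i hi) (hup i hi) (abs_nonneg _) ((abs_nonneg _).trans (hincoh i hi))
  calc |∑ i ∈ s, a i * ⟪w i, v⟫| ≤ ∑ i ∈ s, |a i * ⟪w i, v⟫| := abs_sum_le_sum_abs _ _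
    _ ≤ #s • (μ * A) := sum_le_card_nsmul _ _ _ hterm
    _ = #s * (μ * A) := nsmul_eq_mul _ _

theorem abs_inner_le_of_norm_le {x u : E} {σ : ℝ} (hx : ‖x‖ ≤ σ) (hu : ‖u‖ = 1) :
    |⟪x, u⟫| ≤ σ :=
  calc |⟪x, u⟫| ≤ ‖x‖ * ‖u‖ := abs_real_inner_le_norm _ _
    _ ≤ σ := by rwa [hu, mul_one]

end Incoherence

theorem stmt2_general {d m k : ℕ} (w : Fin m → EuclideanSpace ℝ (Fin d))
    (hunit : ∀ i, ‖w i‖ = 1) (μ : ℝ)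
    (hincoh : ∀ i j, i ≠ j → |⟪w i, w j⟫| ≤ μ)
    (S : Finset (Fin m)) (hS : S.card = k)
    (a : Fin m → ℝ) (α A : ℝ)
    (hsupp : ∀ i ∉ S, a i = 0)
    (hlow : ∀ i ∈ S, α ≤ |a i|) (hup : ∀ i, |a i| ≤ A)
    (ε h : EuclideanSpace ℝ (Fin d)) (σ : ℝ) (hε : ‖ε‖ ≤ σ)
    (hh : h = (∑ i ∈ S, a i • w i) + ε)
    (τ : ℝ) (hτ₁ : (k : ℝ) * μ * A + σ < τ)
    (hτ₂ : τ < α - ((k : ℝ) - 1) * μ * A - σ) :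
    ∀ j, |⟪h, w j⟫| > τ ↔ j ∈ S := by
  intro j
  set cross := ∑ i ∈ S.erase j, a i * ⟪w i, w j⟫
  have hdecomp : ⟪h, w j⟫ = a j + (cross + ⟪ε, w j⟫) := by
    rw [hh, inner_add_left, inner_sum_smul_eq_add_sum_erase w a S (hunit j) (hsupp j), add_assoc]
  have hcross : |cross| ≤ #(S.erase j) * (μ * A) :=
    abs_sum_mul_inner_le w a _ _ (fun i hi => hincoh i j (ne_of_mem_erase hi)) (fun i _ => hup i)
  have hnoise : |⟪ε, w j⟫| ≤ σ := abs_inner_le_of_norm_le hε (hunit j)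
  have hinterference : |cross + ⟪ε, w j⟫| ≤ #(S.erase j) * (μ * A) + σ :=
    (abs_add_le _ _).trans (add_le_add hcross hnoise)
  constructor
  · contrapose!
    intro hj
    rw [erase_eq_of_notMem hj, hS] at hinterference
    rw [hdecomp, hsupp j hj, zero_add]
    linarith
  · intro hj
    rw [cast_card_erase_of_mem hj, hS] at hinterference
    have hreverse : |a j| - |cross + ⟪ε, w j⟫| ≤ |⟪h, w j⟫| :=
      hdecomp ▸ abs_sub_abs_le_abs_add _ _
    linarith [hlow j hj]

theorem stmt2 {d m k : ℕ} (w : Fin m → EuclideanSpace ℝ (Fin d))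
    (hunit : ∀ i, ‖w i‖ = 1) (μ : ℝ)
    (hincoh : ∀ i j, i ≠ j → |⟪w i, w j⟫| ≤ μ)
    (S : Finset (Fin m)) (hS : S.card = k)
    (a : Fin m → ℝ) (α A : ℝ) (hαA : α ≤ A)
    (hsupp : ∀ i ∉ S, a i = 0)
    (hlow : ∀ i ∈ S, α ≤ |a i|) (hup : ∀ i, |a i| ≤ A)
    (ε h : EuclideanSpace ℝ (Fin d)) (σ : ℝ) (hε : ‖ε‖ ≤ σ)
    (hh : h = (∑ i ∈ S, a i • w i) + ε)
    (τ : ℝ) (hτ₁ : (k : ℝ) * μ * A + σ < τ)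
    (hτ₂ : τ < α - ((k : ℝ) - 1) * μ * A - σ) :
    ∀ j, |⟪h, w j⟫| > τ ↔ j ∈ S :=
  stmt2_general w hunit μ hincoh S hS a α A hsupp hlow hup ε h σ hε hh τ hτ₁ hτ₂
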